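/- Let 0 < δ < π. There is a constant C > 0 depending only on δ such that for all real λ and θ with |θ| ≤ δ, |(λ+iθ)/sinh(λ+iθ) - (λ+iθ)·coth(λ+iθ)| ≤ C·(λ/sinh λ)·(1 + cosh λ) ≤ C'·(1 + |λ|), where C' is a constant depending only on δ. -/

import Mathlib

open Real

private lemma le_of_sq_le' {a b : ℝ} (ha : 0 ≤ a) (hb : 0 ≤ b) (h : a^2 ≤ b^2) : a ≤ b := by
  nlinarith

private lemma sinh_le_two_mul {x : ℝ} (h0 : 0 ≤ x) (h1 : x ≤ 1) : Real.sinh x ≤ 2 * x := by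
  have hchord := convexOn_exp.2 (Set.mem_univ (0:ℝ)) (Set.mem_univ (1:ℝ))
    (by linarith : (0:ℝ) ≤ 1 - x) h0 (by ring)
  simp only [smul_eq_mul, mul_zero, mul_one, Real.exp_zero, zero_add] at hchord
  have h2 : 1 - x ≤ Real.exp (-x) := by linarith [Real.add_one_le_exp (-x)]
  have h3 : Real.exp 1 < 2.7182818286 := Real.exp_one_lt_d9
  rw [Real.sinh_eq]
  nlinarith [mul_le_mul_of_nonneg_left h3.le h0]

private lemma one_add_cosh_le {x : ℝ} (h1 : 1 ≤ x) : 1 + Real.cosh x ≤ 5 * Real.sinh x := by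
  have hu : x + 1 ≤ Real.exp x := Real.add_one_le_exp x
  have hv : 0 < Real.exp (-x) := Real.exp_pos _
  have huv : Real.exp x * Real.exp (-x) = 1 := by
    rw [← Real.exp_add]; simp
  rw [Real.sinh_eq, Real.cosh_eq]
  nlinarith

private lemma mul_one_add_cosh_le {x : ℝ} (h0 : 0 ≤ x) :
    x * (1 + Real.cosh x) ≤ (x + 2) * Real.sinh x := by
  have hu : x + 1 ≤ Real.exp x := Real.add_one_le_exp x
  have hv : 0 < Real.exp (-x) := Real.exp_pos _
  have huv : Real.exp x * Real.exp (-x) = 1 := by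
    rw [← Real.exp_add]; simp
  have hv1 : Real.exp (-x) * (x + 1) ≤ 1 := by
    calc Real.exp (-x) * (x + 1) ≤ Real.exp (-x) * Real.exp x := by
          exact mul_le_mul_of_nonneg_left hu hv.le
      _ = 1 := by rw [mul_comm]; exact huv
  rw [Real.sinh_eq, Real.cosh_eq]
  nlinarith

private lemma cosh_le_two {x : ℝ} (h1 : |x| ≤ 1) : Real.cosh x ≤ 2 := by
  have h2 : Real.cosh x ≤ Real.cosh 1 := by
    rw [Real.cosh_le_cosh]; simpa using h1
  have h3 : Real.exp 1 < 2.7182818286 := Real.exp_one_lt_d9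
  have h4 : Real.exp (-1 : ℝ) ≤ 1 := by
    rw [Real.exp_le_one_iff]; norm_num
  have hc1 : Real.cosh 1 = (Real.exp 1 + Real.exp (-1 : ℝ))/2 := Real.cosh_eq 1
  rw [hc1] at h2
  linarith

private lemma sin_lower {δ θ : ℝ} (hδ0 : 0 < δ) (hδπ : δ ≤ π) (h0 : 0 ≤ θ) (h1 : θ ≤ δ) :
    Real.sin δ / δ * θ ≤ Real.sin θ := by
  have hmem0 : (0:ℝ) ∈ Set.Icc (0:ℝ) π := ⟨le_refl _, Real.pi_pos.le⟩
  have hmemδ : δ ∈ Set.Icc (0:ℝ) π := ⟨hδ0.le, hδπ⟩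
  have ha : 0 ≤ 1 - θ/δ := by
    have : θ/δ ≤ 1 := by rw [div_le_one hδ0]; exact h1
    linarith
  have hb : 0 ≤ θ/δ := div_nonneg h0 hδ0.le
  have hc := (strictConcaveOn_sin_Icc.concaveOn).2 hmem0 hmemδ ha hb (by ring)
  simp only [smul_eq_mul, mul_zero, Real.sin_zero, zero_add] at hc
  have hθ : (θ/δ) * δ = θ := div_mul_cancel₀ θ hδ0.ne'
  rw [hθ] at hc
  calc Real.sin δ / δ * θ = (θ/δ) * Real.sin δ := by ring
    _ ≤ Real.sin θ := by linarith [hc]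

private lemma abs_sinh_complex (l θ : ℝ) :
    ‖Complex.sinh ((l : ℂ) + θ * Complex.I)‖^2
      = Real.sinh l ^ 2 + Real.sin θ ^ 2 := by
  have h : Complex.sinh ((l : ℂ) + θ * Complex.I)
      = (Real.sinh l * Real.cos θ : ℝ) + (Real.cosh l * Real.sin θ : ℝ) * Complex.I := by
    rw [Complex.sinh_add, Complex.sinh_mul_I, Complex.cosh_mul_I]
    push_cast [← Complex.ofReal_sinh, ← Complex.ofReal_cosh, ← Complex.ofReal_sin,
      ← Complex.ofReal_cos]
    ring
  rw [h, Complex.sq_norm, Complex.normSq_add_mul_I]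
  have h1 := Real.sin_sq_add_cos_sq θ
  have h2 := Real.cosh_sq l
  nlinarith

private lemma abs_cosh_complex (l θ : ℝ) :
    ‖Complex.cosh ((l : ℂ) + θ * Complex.I)‖ ≤ Real.cosh l := by
  have h : Complex.cosh ((l : ℂ) + θ * Complex.I)
      = (Real.cosh l * Real.cos θ : ℝ) + (Real.sinh l * Real.sin θ : ℝ) * Complex.I := by
    rw [Complex.cosh_add, Complex.sinh_mul_I, Complex.cosh_mul_I]
    push_cast [← Complex.ofReal_sinh, ← Complex.ofReal_cosh, ← Complex.ofReal_sin,
      ← Complex.ofReal_cos]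
    ring
  refine le_of_sq_le' (norm_nonneg _) (Real.cosh_pos l).le ?_
  rw [h, Complex.sq_norm, Complex.normSq_add_mul_I]
  have h1 := Real.sin_sq_add_cos_sq θ
  have h2 := Real.cosh_sq l
  nlinarith [sq_nonneg (Real.sin θ)]

set_option maxHeartbeats 1600000 in
/-- For `|θ| ≤ δ < π` there are constants `C, C' > 0` depending only on `δ` with
`|(λ+iθ)/sinh(λ+iθ) - (λ+iθ)coth(λ+iθ)| ≤ C (λ/sinh λ)(1 + cosh λ) ≤ C'(1+|λ|)`. -/
theorem abs_div_sinh_sub_coth_bound (δ : ℝ) (hδ : δ < π) :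
    ∃ C > 0, ∃ C' > 0, ∀ l θ : ℝ, |θ| ≤ δ →
      (‖(((l : ℂ) + θ * Complex.I) / Complex.sinh ((l : ℂ) + θ * Complex.I)
            - ((l : ℂ) + θ * Complex.I) *
              (Complex.cosh ((l : ℂ) + θ * Complex.I) / Complex.sinh ((l : ℂ) + θ * Complex.I)))‖
          ≤ C * ((if l = 0 then 1 else l / Real.sinh l) * (1 + Real.cosh l)) ∧
        C * ((if l = 0 then 1 else l / Real.sinh l) * (1 + Real.cosh l)) ≤ C' * (1 + |l|)) := by
  have hπ : 0 < π := Real.pi_pos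
  set δ₁ : ℝ := max δ (π/2) with hδ₁def
  have hδ₁0 : 0 < δ₁ := lt_of_lt_of_le (by linarith) (le_max_right _ _)
  have hδ₁π : δ₁ < π := max_lt hδ (by linarith)
  set c₀ : ℝ := min 1 (Real.sin δ₁ / δ₁) with hc₀def
  have hc₀ : 0 < c₀ := lt_min one_pos (div_pos (Real.sin_pos_of_pos_of_lt_pi hδ₁0 hδ₁π) hδ₁0)
  have hc₀1 : c₀ ≤ 1 := min_le_left _ _
  have h3c : (0:ℝ) < 3 / c₀ := div_pos (by norm_num) hc₀
  set K : ℝ := 20 + 3 / c₀ with hKdef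
  have hK : 0 < K := by rw [hKdef]; linarith
  refine ⟨2*K, by linarith, 4*K, by linarith, fun l θ hθ => ?_⟩
  have hθ₁ : |θ| ≤ δ₁ := le_trans hθ (le_max_left _ _)
  set z : ℂ := (l : ℂ) + θ * Complex.I with hzdef
  set s : ℂ := Complex.sinh z with hsdef
  set c : ℂ := Complex.cosh z with hcdef
  have hE : z / s - z * (c / s) = z * (1 - c) / s := by
    rw [← mul_div_assoc, div_sub_div_same, mul_one_sub]
  have habs : ‖z / s - z * (c / s)‖
      = ‖z‖ * ‖1 - c‖ / ‖s‖ := by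
    rw [hE, norm_div, norm_mul]
  have hzabs : (‖z‖)^2 = l^2 + θ^2 := by
    rw [hzdef, Complex.sq_norm, Complex.normSq_add_mul_I]
  have hsabs : (‖s‖)^2 = Real.sinh l ^ 2 + Real.sin θ ^ 2 := abs_sinh_complex l θ
  have hcabs : ‖c‖ ≤ Real.cosh l := abs_cosh_complex l θ
  have h1c : ‖1 - c‖ ≤ 1 + Real.cosh l := by
    have h := norm_sub_le (1 : ℂ) c
    simp only [norm_one] at h
    linarith
  have hz_le : ‖z‖ ≤ |l| + δ₁ := by
    calc ‖z‖ ≤ ‖(l : ℂ)‖ + ‖(θ:ℂ) * Complex.I‖ :=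
          norm_add_le _ _
      _ = |l| + |θ| := by
          rw [norm_mul, Complex.norm_I, mul_one, Complex.norm_real, Complex.norm_real, Real.norm_eq_abs,
              Real.norm_eq_abs]
      _ ≤ |l| + δ₁ := by linarith
  have hl_sinh : |l| ≤ |Real.sinh l| := by
    rw [Real.abs_sinh]
    rcases (abs_nonneg l).eq_or_lt with h | h
    · rw [← h]; simp
    · exact (Real.self_lt_sinh_iff.2 h).le
  have hθ_sin : c₀ * |θ| ≤ Real.sin |θ| := by
    calc c₀ * |θ| ≤ (Real.sin δ₁ / δ₁) * |θ| :=
          mul_le_mul_of_nonneg_right (min_le_right _ _) (abs_nonneg θ)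
      _ ≤ Real.sin |θ| := sin_lower hδ₁0 hδ₁π.le (abs_nonneg θ) hθ₁
  have hsin_sq : Real.sin |θ| ^ 2 = Real.sin θ ^ 2 := by
    rcases abs_cases θ with ⟨h, _⟩ | ⟨h, _⟩ <;> rw [h]
    rw [Real.sin_neg]; ring
  -- Key bound: the absolute value is at most K * (1 + |l|)
  have key1 : ‖z / s - z * (c / s)‖ ≤ K * (1 + |l|) := by
    rw [habs]
    rcases le_total |l| 1 with hx1 | hx1
    · -- small |l|
      have hcosh2 : Real.cosh l ≤ 2 := cosh_le_two hx1
      have hsz : c₀ * ‖z‖ ≤ ‖s‖ := by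
        apply le_of_sq_le' (mul_nonneg hc₀.le (norm_nonneg _)) (norm_nonneg _)
        rw [mul_pow, hzabs, hsabs]
        have e1 : (c₀ * |l|)^2 ≤ Real.sinh l ^ 2 := by
          have h1 : c₀ * |l| ≤ |Real.sinh l| := by
            nlinarith [abs_nonneg l]
          calc (c₀ * |l|)^2 ≤ |Real.sinh l|^2 :=
                pow_le_pow_left₀ (mul_nonneg hc₀.le (abs_nonneg l)) h1 2
            _ = Real.sinh l ^ 2 := sq_abs _
        have e2 : (c₀ * |θ|)^2 ≤ Real.sin θ ^ 2 := by
          calc (c₀ * |θ|)^2 ≤ (Real.sin |θ|)^2 :=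
                pow_le_pow_left₀ (mul_nonneg hc₀.le (abs_nonneg θ)) hθ_sin 2
            _ = Real.sin θ ^ 2 := hsin_sq
        nlinarith [e1, e2, sq_abs l, sq_abs θ]
      rcases (norm_nonneg z).eq_or_lt with hz0 | hz0
      · rw [← hz0, zero_mul, zero_div]
        positivity
      · have hczpos : 0 < c₀ * ‖z‖ := mul_pos hc₀ hz0
        have hs0 : 0 < ‖s‖ := lt_of_lt_of_le hczpos hsz
        have hcoshpos : (0:ℝ) < 1 + Real.cosh l := by nlinarith [Real.cosh_pos l]
        calc ‖z‖ * ‖1 - c‖ / ‖s‖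
            ≤ ‖z‖ * (1 + Real.cosh l) / (c₀ * ‖z‖) := by
              apply div_le_div₀ (mul_nonneg (norm_nonneg z) hcoshpos.le)
                (mul_le_mul_of_nonneg_left h1c (norm_nonneg z)) hczpos hsz
          _ = (1 + Real.cosh l) / c₀ := by
              rw [mul_comm c₀ (‖z‖), mul_div_mul_left _ _ (ne_of_gt hz0)]
          _ ≤ 3 / c₀ := (div_le_div_iff_of_pos_right hc₀).2 (by linarith)
          _ ≤ K * (1 + |l|) := by
              rw [hKdef]
              nlinarith [mul_nonneg h3c.le (abs_nonneg l), h3c.le, abs_nonneg l]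
    · -- large |l|
      have hsinh_pos : 0 < Real.sinh |l| := Real.sinh_pos_iff.2 (by linarith)
      have hcl : Real.cosh l = Real.cosh |l| := (Real.cosh_abs l).symm
      have hcoshpos : (0:ℝ) < 1 + Real.cosh l := by nlinarith [Real.cosh_pos l]
      have hs_ge : Real.sinh |l| ≤ ‖s‖ := by
        apply le_of_sq_le' hsinh_pos.le (norm_nonneg _)
        rw [hsabs]
        have h2 : Real.sinh |l| ^ 2 = Real.sinh l ^ 2 := by
          rw [← Real.abs_sinh]; exact sq_abs _
        nlinarith [sq_nonneg (Real.sin θ)]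
      have h5 : 1 + Real.cosh |l| ≤ 5 * Real.sinh |l| := one_add_cosh_le hx1
      have hlδpos : (0:ℝ) ≤ |l| + δ₁ := by positivity
      calc ‖z‖ * ‖1 - c‖ / ‖s‖
          ≤ (|l| + δ₁) * (1 + Real.cosh l) / Real.sinh |l| := by
            apply div_le_div₀ (mul_nonneg hlδpos hcoshpos.le)
              (mul_le_mul hz_le h1c (norm_nonneg _) hlδpos) hsinh_pos hs_ge
        _ ≤ 5 * (|l| + δ₁) := by
            rw [div_le_iff₀ hsinh_pos, hcl]
            nlinarith [abs_nonneg l, hδ₁0.le]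
        _ ≤ K * (1 + |l|) := by
            rw [hKdef]
            nlinarith [mul_nonneg h3c.le (abs_nonneg l), Real.pi_le_four, hδ₁π.le, h3c.le,
              abs_nonneg l]
  -- bounds on g
  set g : ℝ := (if l = 0 then 1 else l / Real.sinh l) * (1 + Real.cosh l) with hgdef
  have hg1 : 1 + |l| ≤ 2 * g := by
    by_cases hl : l = 0
    · rw [hgdef, if_pos hl, hl]
      norm_num
    · have hratio : l / Real.sinh l = |l| / Real.sinh |l| := by
        rcases lt_or_gt_of_ne hl with h | h
        · rw [abs_of_neg h, Real.sinh_neg, neg_div_neg_eq]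
        · rw [abs_of_pos h]
      have hx0 : 0 < |l| := abs_pos.2 hl
      have hsp : 0 < Real.sinh |l| := Real.sinh_pos_iff.2 hx0
      have hcl : Real.cosh l = Real.cosh |l| := (Real.cosh_abs l).symm
      rw [hgdef, if_neg hl, hratio, hcl, div_mul_eq_mul_div, ← mul_div_assoc,
        le_div_iff₀ hsp]
      rcases le_total |l| 1 with h1 | h1
      · nlinarith [sinh_le_two_mul (abs_nonneg l) h1, Real.one_le_cosh |l|, hsp]
      · nlinarith [Real.sinh_lt_cosh |l|, hsp, Real.one_le_cosh |l|]
  have hg2 : g ≤ 2 * (1 + |l|) := by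
    by_cases hl : l = 0
    · rw [hgdef, if_pos hl, hl]
      norm_num
    · have hratio : l / Real.sinh l = |l| / Real.sinh |l| := by
        rcases lt_or_gt_of_ne hl with h | h
        · rw [abs_of_neg h, Real.sinh_neg, neg_div_neg_eq]
        · rw [abs_of_pos h]
      have hx0 : 0 < |l| := abs_pos.2 hl
      have hsp : 0 < Real.sinh |l| := Real.sinh_pos_iff.2 hx0
      have hcl : Real.cosh l = Real.cosh |l| := (Real.cosh_abs l).symm
      rw [hgdef, if_neg hl, hratio, hcl, div_mul_eq_mul_div, div_le_iff₀ hsp]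
      nlinarith [mul_one_add_cosh_le (abs_nonneg l), hsp.le, abs_nonneg l]
  constructor
  · calc ‖z / s - z * (c / s)‖ ≤ K * (1 + |l|) := key1
      _ ≤ K * (2 * g) := by nlinarith
      _ = 2 * K * g := by ring
  · calc 2 * K * g ≤ 2 * K * (2 * (1 + |l|)) := by nlinarith
      _ = 4 * K * (1 + |l|) := by ring
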